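/- The two-sided full shift Σ_A^Z over a countably infinite alphabet, with the cylinder topology, is compact and sequentially compact. -/

import Mathlib

open Set Topology Filter TopologicalSpace

universe u

/-- The two-sided full shift over `A`: sequences over `A ∪ {ø}` (with `ø = none`)
in which the empty letter propagates to the right. -/
def SigmaZ (A : Type u) : Type u :=
  {x : ℤ → Option A // ∀ i, x i = none → x (i + 1) = none}

namespace SigmaZ

variable {A : Type u}

/-- The generalized cylinder `Z(x, F)`, where the finite nonempty sequence `x` is
encoded by its length `k` and its letters `w i` for `i ≤ k`. -/
def cyl (k : ℤ) (w : ℤ → A) (F : Finset A) : Set (SigmaZ A) :=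
  {y | (∀ i ≤ k, y.1 i = some (w i)) ∧ ∀ a ∈ F, y.1 (k + 1) ≠ some a}

/-- Generalized cylinders together with complements of finite unions of cylinders `Z(x)`. -/
def basicSets (A : Type u) : Set (Set (SigmaZ A)) :=
  {s | (∃ (k : ℤ) (w : ℤ → A) (F : Finset A), s = cyl k w F) ∨
    ∃ (n : ℕ) (ks : Fin n → ℤ) (ws : Fin n → ℤ → A),
      s = (⋃ j, cyl (ks j) (ws j) ∅)ᶜ}

instance : TopologicalSpace (SigmaZ A) :=
  TopologicalSpace.generateFrom (basicSets A)

/-- The empty sequence `Ø`. -/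
def emptySeq (A : Type u) : SigmaZ A := ⟨fun _ => none, fun _ _ => rfl⟩

/-- The shift map. -/
def shift (x : SigmaZ A) : SigmaZ A :=
  ⟨fun i => x.1 (i + 1), fun i h => x.2 (i + 1) h⟩

end SigmaZ

namespace SigmaZ

variable {A : Type u}

lemma none_mono {y : SigmaZ A} {i j : ℤ} (h : y.1 i = none) (hij : i ≤ j) : y.1 j = none :=
  Int.le_induction h (fun n _ hn => y.2 n hn) j hij

lemma le_nhds_of_basic {l : Filter (SigmaZ A)} {x : SigmaZ A}
    (h : ∀ s ∈ basicSets A, x ∈ s → s ∈ l) : l ≤ 𝓝 x := by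
  have hn : 𝓝 x = ⨅ s ∈ {s | x ∈ s ∧ s ∈ basicSets A}, 𝓟 s := nhds_generateFrom
  rw [hn]
  exact le_iInf₂ fun s hs => le_principal_iff.2 (h s hs.2 hs.1)

lemma exists_ultrafilter_limit (U : Ultrafilter (SigmaZ A)) : ∃ x : SigmaZ A, ↑U ≤ 𝓝 x := by
  classical
  set S : ℤ → (ℤ → A) → Set (SigmaZ A) := fun k w => {y | ∀ j ≤ k, y.1 j = some (w j)} with hS
  set P : ℤ → Prop := fun k => ∃ w, S k w ∈ U with hP
  have uniq : ∀ {k k' : ℤ} {w w' : ℤ → A} {j : ℤ}, S k w ∈ U → S k' w' ∈ U →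
      j ≤ k → j ≤ k' → w j = w' j := by
    intro k k' w w' j h1 h2 hj hj'
    obtain ⟨y, hy1, hy2⟩ := Ultrafilter.nonempty_of_mem (inter_mem h1 h2)
    exact Option.some_injective _ ((hy1 j hj).symm.trans (hy2 j hj'))
  have Pmono : ∀ {j k : ℤ}, j ≤ k → P k → P j := by
    rintro j k hjk ⟨w, hw⟩
    exact ⟨w, mem_of_superset hw fun y hy i hi => hy i (hi.trans hjk)⟩
  set xf : ℤ → Option A := fun i => if h : P i then some ((h.choose) i) else none with hxf
  have master : ∀ {k : ℤ} {w : ℤ → A}, S k w ∈ U → ∀ j ≤ k, xf j = some (w j) := by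
    intro k w hw j hj
    have hPj : P j := Pmono hj ⟨w, hw⟩
    have : hPj.choose j = w j := uniq hPj.choose_spec hw le_rfl hj
    simp only [hxf, dif_pos hPj, this]
  have xsome : ∀ {i : ℤ} {a : A}, xf i = some a → P i := by
    intro i a h
    by_contra hp
    simp only [hxf, dif_neg hp] at h
    cases h
  have xprop : ∀ i, xf i = none → xf (i + 1) = none := by
    intro i hi
    rcases h : xf (i + 1) with _ | a
    · rfl
    · have hPi : P i := Pmono (by omega) (xsome h)
      rw [hxf] at hi
      simp only [dif_pos hPi] at hi
      cases hi
  refine ⟨⟨xf, xprop⟩, le_nhds_of_basic ?_⟩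
  rintro s (⟨k, w, F, rfl⟩ | ⟨n, ks, ws, rfl⟩) hx
  · obtain ⟨h1, h2⟩ := hx
    have hPk : P k := xsome (h1 k le_rfl)
    have hSk : S k hPk.choose ∈ U := hPk.choose_spec
    have hSkw : S k w ∈ U := by
      refine mem_of_superset hSk fun y hy j hj => ?_
      rw [hy j hj]
      congr 1
      have h3 := master hSk j hj
      have h4 := h1 j hj
      exact Option.some_injective _ (h3.symm.trans h4)
    have hF : {y : SigmaZ A | ∀ a ∈ F, y.1 (k + 1) ≠ some a} ∈ U := by
      rcases hq : xf (k + 1) with _ | a'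
      · have hPk1 : ¬P (k + 1) := fun h => by
          rw [hxf] at hq; simp only [dif_pos h] at hq; cases hq
        have hrw : {y : SigmaZ A | ∀ a ∈ F, y.1 (k + 1) ≠ some a}
            = ⋂ a ∈ F, {y : SigmaZ A | y.1 (k + 1) ≠ some a} := by
          ext y; simp
        rw [hrw]
        refine (Filter.biInter_finset_mem F).2 fun a _ => ?_
        by_contra hmem
        have hcompl : {y : SigmaZ A | y.1 (k + 1) = some a} ∈ U := by
          have := (Ultrafilter.compl_mem_iff_notMem).2 hmem
          convert this using 1
          ext y; simp
        refine hPk1 ⟨fun j => if j = k + 1 then a else w j, ?_⟩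
        refine mem_of_superset (inter_mem hSkw hcompl) fun y ⟨hy1, hy2⟩ j hj => ?_
        rcases eq_or_ne j (k + 1) with rfl | hne
        · simpa using hy2
        · simpa [hne] using hy1 j (by omega)
      · have hPk1 : P (k + 1) := xsome hq
        have ha' : hPk1.choose (k + 1) = a' := by
          have := master hPk1.choose_spec (k + 1) le_rfl
          rw [this] at hq
          exact Option.some_injective _ hq
        refine mem_of_superset hPk1.choose_spec fun y hy a haF heq => ?_
        have h5 := hy (k + 1) le_rfl
        rw [heq] at h5
        have : a = a' := by
          have := Option.some_injective _ h5
          rw [← ha', this]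
        exact h2 a haF (by show xf (k + 1) = some a; rw [hq, this])
    exact inter_mem hSkw hF
  · have hcompl : ∀ j, cyl (ks j) (ws j) (∅ : Finset A) ∉ U := by
      intro j hj
      have hSj : S (ks j) (ws j) ∈ U := mem_of_superset hj fun y hy => hy.1
      refine hx (mem_iUnion.2 ⟨j, ⟨master hSj, ?_⟩⟩)
      simp
    rw [compl_iUnion]
    exact iInter_mem.2 fun j => (Ultrafilter.compl_mem_iff_notMem).2 (hcompl j)

end SigmaZ
namespace SigmaZ

variable {A : Type u}

lemma seq_limit (x : ℕ → SigmaZ A) :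
    ∃ a : SigmaZ A, ∃ φ : ℕ → ℕ, StrictMono φ ∧ Tendsto (x ∘ φ) atTop (𝓝 a) := by
  classical
  set N : ℤ → (ℤ → A) → Set ℕ := fun k w => {n | ∀ j ≤ k, (x n).1 j = some (w j)} with hN
  set ext : (ℤ → A) → ℤ → A → ℤ → A := fun w k a j => if j = k + 1 then a else w j with hext'
  have memNext : ∀ {k : ℤ} {w : ℤ → A} {a : A} {n : ℕ},
      n ∈ N (k + 1) (ext w k a) ↔ n ∈ N k w ∧ (x n).1 (k + 1) = some a := by
    intro k w a n
    constructor
    · intro h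
      refine ⟨fun j hj => ?_, ?_⟩
      · have := h j (by omega)
        simpa [hext', show j ≠ k + 1 by omega] using this
      · simpa [hext'] using h (k + 1) le_rfl
    · rintro ⟨h1, h2⟩ j hj
      rcases eq_or_ne j (k + 1) with rfl | hne
      · simpa [hext'] using h2
      · simpa [hext', hne] using h1 j (by omega)
  have tend : ∀ (φ : ℕ → ℕ) (a : SigmaZ A),
      (∀ s ∈ basicSets A, a ∈ s → ∀ᶠ m in atTop, x (φ m) ∈ s) →
      Tendsto (x ∘ φ) atTop (𝓝 a) := by
    intro φ a h
    exact le_nhds_of_basic fun s hs has => mem_map.2 (h s hs has)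
  by_cases h0 : ∀ (k : ℤ) (w : ℤ → A), (N k w).Finite
  · -- everything escapes: converge to the empty sequence
    refine ⟨emptySeq A, id, strictMono_id, tend id (emptySeq A) ?_⟩
    rintro s (⟨k, w, F, rfl⟩ | ⟨n, ks, ws, rfl⟩) hx
    · exact absurd (hx.1 k le_rfl) (by simp [emptySeq])
    · have : ∀ j, ∀ᶠ m in atTop, x m ∉ cyl (ks j) (ws j) ∅ := by
        intro j
        have hfin : {m | x m ∈ cyl (ks j) (ws j) ∅}.Finite :=
          (h0 (ks j) (ws j)).subset fun m hm => hm.1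
        rw [← Nat.cofinite_eq_atTop]
        exact hfin.eventually_cofinite_notMem
      have := (eventually_all (ι := Fin n)).2 this
      filter_upwards [this] with m hm
      simp only [id_eq, mem_compl_iff, mem_iUnion, not_exists]
      exact hm
  · push_neg at h0
    obtain ⟨k₀, w₀, hQ₀⟩ := h0
    by_cases hstep : ∀ (k : ℤ) (w : ℤ → A), (N k w).Infinite →
        ∃ a, (N (k + 1) (ext w k a)).Infinite
    · -- never stalls: converge to an infinite sequence
      have cast1 : ∀ m : ℕ, (k₀ + ((m + 1 : ℕ) : ℤ)) = k₀ + (m : ℤ) + 1 := fun m => by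
        push_cast; ring
      let g : ∀ m : ℕ, {w : ℤ → A // (N (k₀ + (m : ℤ)) w).Infinite} := fun m =>
        Nat.rec ⟨w₀, by simpa using hQ₀⟩
          (fun m p => ⟨ext p.1 (k₀ + (m : ℤ)) (hstep (k₀ + (m : ℤ)) p.1 p.2).choose,
            by rw [cast1 m]; exact (hstep (k₀ + (m : ℤ)) p.1 p.2).choose_spec⟩) m
      have agree1 : ∀ m : ℕ, ∀ j ≤ k₀ + (m : ℤ), (g (m + 1)).1 j = (g m).1 j := by
        intro m j hj
        show (if j = k₀ + (m : ℤ) + 1 then _ else (g m).1 j) = (g m).1 j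
        rw [if_neg (by omega)]
      have agree : ∀ (m m' : ℕ), m ≤ m' → ∀ j ≤ k₀ + (m : ℤ), (g m').1 j = (g m).1 j := by
        intro m m' hmm'
        induction m' with
        | zero => intro j hj; obtain rfl : m = 0 := Nat.le_zero.1 hmm'; rfl
        | succ m' ih =>
          intro j hj
          rcases Nat.lt_or_ge m (m' + 1) with h | h
          · have hm : m ≤ m' := by omega
            rw [agree1 m' j (le_trans hj (by omega)), ih hm j hj]
          · obtain rfl : m = m' + 1 := by omega
            rfl
      set W : ℤ → A := fun j => (g (j - k₀).toNat).1 j with hW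
      have keyW : ∀ m : ℕ, ∀ j ≤ k₀ + (m : ℤ), (g m).1 j = W j := by
        intro m j hj
        have hj2 : j ≤ k₀ + ((j - k₀).toNat : ℤ) := by
          have := Int.self_le_toNat (j - k₀); omega
        set m' : ℕ := max m (j - k₀).toNat with hm'
        have e1 : (g m').1 j = (g m).1 j := agree m m' (le_max_left _ _) j hj
        have e2 : (g m').1 j = (g (j - k₀).toNat).1 j :=
          agree (j - k₀).toNat m' (le_max_right _ _) j hj2
        rw [← e1, e2]
      set L : SigmaZ A := ⟨fun j => some (W j), fun i h => absurd h (Option.some_ne_none _)⟩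
        with hL
      have exgt : ∀ (m : ℕ) (b : ℕ), ∃ n, n ∈ N (k₀ + (m : ℤ)) (g m).1 ∧ b < n := by
        intro m b
        obtain ⟨n, hn, hbn⟩ := (g m).2.exists_gt b
        exact ⟨n, hn, hbn⟩
      let ψ : ℕ → ℕ := fun m =>
        Nat.rec (exgt 0 0).choose (fun m prev => (exgt (m + 1) prev).choose) m
      have hψmem : ∀ m : ℕ, ψ m ∈ N (k₀ + (m : ℤ)) (g m).1 := by
        intro m
        cases m with
        | zero => exact (exgt 0 0).choose_spec.1
        | succ m => exact (exgt (m + 1) (ψ m)).choose_spec.1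
      have hψ : StrictMono ψ :=
        strictMono_nat_of_lt_succ fun m => (exgt (m + 1) (ψ m)).choose_spec.2
      have hco : ∀ m : ℕ, ∀ j ≤ k₀ + (m : ℤ), (x (ψ m)).1 j = some (W j) := by
        intro m j hj
        rw [hψmem m j hj, keyW m j hj]
      refine ⟨L, ψ, hψ, tend ψ L ?_⟩
      rintro s (⟨k, w, F, rfl⟩ | ⟨n, ks, ws, rfl⟩) hx
      · obtain ⟨h1, h2⟩ := hx
        have hWw : ∀ i ≤ k, W i = w i := fun i hi =>
          Option.some_injective _ (h1 i hi)
        have hWF : ∀ a ∈ F, W (k + 1) ≠ a := by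
          intro a ha heq
          exact h2 a ha (by show some (W (k+1)) = some a; rw [heq])
        set M : ℕ := (k + 1 - k₀).toNat with hM
        have hMk : k + 1 ≤ k₀ + (M : ℤ) := by
          have := Int.self_le_toNat (k + 1 - k₀); omega
        filter_upwards [eventually_ge_atTop M] with m hm
        have hmk : k + 1 ≤ k₀ + (m : ℤ) := le_trans hMk (by omega)
        refine ⟨fun i hi => ?_, fun a ha => ?_⟩
        · rw [hco m i (by omega), hWw i hi]
        · rw [hco m (k + 1) hmk]
          exact fun hc => hWF a ha (Option.some_injective _ hc)
      · have : ∀ j, ∀ᶠ m in atTop, x (ψ m) ∉ cyl (ks j) (ws j) ∅ := by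
          intro j
          have hnot : ¬∀ i ≤ ks j, L.1 i = some (ws j i) := by
            intro hc
            exact hx (mem_iUnion.2 ⟨j, ⟨hc, by simp⟩⟩)
          push_neg at hnot
          obtain ⟨i, hi, hne⟩ := hnot
          have hne' : W i ≠ ws j i := fun hc => hne (by show some (W i) = _; rw [hc])
          set M : ℕ := (i - k₀).toNat with hM
          have hMk : i ≤ k₀ + (M : ℤ) := by
            have := Int.self_le_toNat (i - k₀); omega
          filter_upwards [eventually_ge_atTop M] with m hm hmem
          have hmk : i ≤ k₀ + (m : ℤ) := le_trans hMk (by omega)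
          have := hmem.1 i hi
          rw [hco m i hmk] at this
          exact hne' (Option.some_injective _ this)
        have := (eventually_all (ι := Fin n)).2 this
        filter_upwards [this] with m hm
        simp only [mem_compl_iff, mem_iUnion, not_exists]
        exact hm
    · -- stalls at some (k, w): converge to the finite word y*
      push_neg at hstep
      obtain ⟨k, w, hQ, hfin⟩ := hstep
      have hyprop : ∀ i : ℤ, (if i ≤ k then some (w i) else (none : Option A)) = none →
          (if i + 1 ≤ k then some (w (i + 1)) else (none : Option A)) = none := by
        intro i h
        split at h
        · exact absurd h (Option.some_ne_none _)
        · next hik => rw [if_neg (by omega)]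
      set Y : SigmaZ A := ⟨fun i => if i ≤ k then some (w i) else none, hyprop⟩ with hY
      let φ : ℕ → ℕ := Nat.nth (· ∈ N k w)
      have hNset : {n | (fun n => n ∈ N k w) n}.Infinite := hQ
      have hφ : StrictMono φ := Nat.nth_strictMono hNset
      have hφmem : ∀ m, φ m ∈ N k w := fun m => Nat.nth_mem_of_infinite hNset m
      have havoid : ∀ B : Set ℕ, B.Finite → ∀ᶠ m in atTop, φ m ∉ B := by
        intro B hB
        rcases B.eq_empty_or_nonempty with rfl | hBne
        · exact Eventually.of_forall fun m => notMem_empty _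
        · obtain ⟨b, hb⟩ := hB.bddAbove
          filter_upwards [hφ.tendsto_atTop.eventually_gt_atTop b] with m hm hmem
          exact absurd (hb hmem) (not_le.2 hm)
      refine ⟨Y, φ, hφ, tend φ Y ?_⟩
      rintro s (⟨k', w', F, rfl⟩ | ⟨n, ks, ws, rfl⟩) hx
      · obtain ⟨h1, h2⟩ := hx
        have hk'k : k' ≤ k := by
          by_contra hc
          have := h1 k' le_rfl
          rw [hY] at this
          simp only [if_neg hc] at this
          cases this
        have hww' : ∀ i ≤ k', w i = w' i := by
          intro i hi
          have := h1 i hi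
          rw [hY] at this
          simp only [if_pos (le_trans hi hk'k)] at this
          exact Option.some_injective _ this
        rcases eq_or_lt_of_le hk'k with rfl | hlt
        · -- k' = k : use finiteness of extensions
          have hbad : (⋃ a ∈ F, N (k' + 1) (ext w k' a)).Finite :=
            Set.Finite.biUnion F.finite_toSet fun a _ => hfin a
          filter_upwards [havoid _ hbad] with m hm
          refine ⟨fun i hi => ?_, fun a ha heq => ?_⟩
          · rw [hφmem m i hi, hww' i hi]
          · exact hm (mem_biUnion ha (memNext.2 ⟨hφmem m, heq⟩))
        · -- k' < k
          have hk1 : k' + 1 ≤ k := hlt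
          have hF : ∀ a ∈ F, w (k' + 1) ≠ a := by
            intro a ha heq
            refine h2 a ha ?_
            rw [hY]
            show (if k' + 1 ≤ k then some (w (k' + 1)) else none) = some a
            rw [if_pos hk1, heq]
          refine Eventually.of_forall fun m => ⟨fun i hi => ?_, fun a ha heq => ?_⟩
          · rw [hφmem m i (le_trans hi hk'k), hww' i hi]
          · rw [hφmem m (k' + 1) hk1] at heq
            exact hF a ha (Option.some_injective _ heq)
      · have : ∀ j, ∀ᶠ m in atTop, x (φ m) ∉ cyl (ks j) (ws j) ∅ := by
          intro j
          have hnot : ¬∀ i ≤ ks j, Y.1 i = some (ws j i) := by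
            intro hc
            exact hx (mem_iUnion.2 ⟨j, ⟨hc, by simp⟩⟩)
          push_neg at hnot
          obtain ⟨i, hi, hne⟩ := hnot
          rcases le_or_gt (ks j) k with hck | hck
          · -- disagreement within range
            have hik : i ≤ k := le_trans hi hck
            have hwv : w i ≠ ws j i := by
              intro hc
              refine hne ?_
              rw [hY]
              show (if i ≤ k then some (w i) else none) = some (ws j i)
              rw [if_pos hik, hc]
            refine Eventually.of_forall fun m hmem => ?_
            have := hmem.1 i hi
            rw [hφmem m i hik] at this
            exact hwv (Option.some_injective _ this)
          · -- ks j > k : bad set finite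
            have hk1 : k + 1 ≤ ks j := hck
            filter_upwards [havoid _ (hfin (ws j (k + 1)))] with m hm hmem
            exact hm (memNext.2 ⟨hφmem m, hmem.1 (k + 1) hk1⟩)
        have := (eventually_all (ι := Fin n)).2 this
        filter_upwards [this] with m hm
        simp only [mem_compl_iff, mem_iUnion, not_exists]
        exact hm

end SigmaZ

/-- The two-sided full shift over a countably infinite alphabet is compact and
sequentially compact. -/
theorem stmt8 {A : Type u} [Countable A] [Infinite A] :
    CompactSpace (SigmaZ A) ∧ SeqCompactSpace (SigmaZ A) := by
  have hc : CompactSpace (SigmaZ A) := by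
    refine ⟨?_⟩
    rw [isCompact_iff_ultrafilter_le_nhds]
    intro U _
    obtain ⟨x, hx⟩ := SigmaZ.exists_ultrafilter_limit U
    exact ⟨x, mem_univ x, hx⟩
  refine ⟨hc, ⟨?_⟩⟩
  intro x _
  obtain ⟨a, φ, hφ, ht⟩ := SigmaZ.seq_limit x
  exact ⟨a, mem_univ a, φ, hφ, ht⟩
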